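/- The Sugeno-type trace ψ_α(a) := max_{i=1,...,n} min(λ_i(a), α(i)) is monotone on positive semidefinite matrices: if 0 ≤ a ≤ b in Mₙ(ℂ), then ψ_α(a) ≤ ψ_α(b). -/

import Mathlib

/-! If `a ≤ b`, then `λ_k(a) ≤ λ_k(b)` for every `k` (Weyl monotonicity): the eigenvectors of `a`
for its `k` largest eigenvalues and those of `b` for its `n - k + 1` smallest ones span subspaces of
total dimension `n + 1`, so they share a unit vector `x`, and
`λ_k(a) ≤ ⟪a x, x⟫ ≤ ⟪b x, x⟫ ≤ λ_k(b)`. Since `min` and `max` are monotone, so is `ψ_α`. -/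

open Matrix BigOperators Finset
open scoped ComplexOrder

/-- The `i`-th largest eigenvalue (0-indexed) of a Hermitian matrix. -/
noncomputable def eigDesc {n : ℕ} (a : Matrix (Fin n) (Fin n) ℂ) (ha : a.IsHermitian) (i : Fin n) : ℝ :=
  ha.eigenvalues (Tuple.sort ha.eigenvalues i.rev)

/-- Eigenvalues in decreasing order, extended by `0` beyond the size. `eigN a ha i = λ_{i+1}(a)`. -/
noncomputable def eigN {n : ℕ} (a : Matrix (Fin n) (Fin n) ℂ) (ha : a.IsHermitian) (i : ℕ) : ℝ :=
  if h : i < n then eigDesc a ha ⟨i, h⟩ else 0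

/-- The non-linear trace of Choquet type:
`φ_α(a) = ∑_{i=1}^{n-1} (λ_i(a) - λ_{i+1}(a)) α(i) + λ_n(a) α(n)`. -/
noncomputable def choquetTrace {n : ℕ} (α : ℕ → ℝ) (a : Matrix (Fin n) (Fin n) ℂ)
    (ha : a.IsHermitian) : ℝ :=
  ∑ i ∈ Finset.range n, (eigN a ha i - eigN a ha (i + 1)) * α (i + 1)

/-- Functional calculus of a Hermitian matrix `a` by a function `f : ℝ → ℝ` on its eigenvalues. -/
noncomputable def funCalc {n : ℕ} (f : ℝ → ℝ) (a : Matrix (Fin n) (Fin n) ℂ)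
    (ha : a.IsHermitian) : Matrix (Fin n) (Fin n) ℂ :=
  (ha.eigenvectorUnitary : Matrix (Fin n) (Fin n) ℂ) *
    Matrix.diagonal (fun i => (f (ha.eigenvalues i) : ℂ)) *
    star (ha.eigenvectorUnitary : Matrix (Fin n) (Fin n) ℂ)

/-- The square root of a positive semidefinite matrix, as Mathlib (Dec 2024) defined
`Matrix.PosSemidef.sqrt`; removed from current Mathlib, restated here verbatim. -/
noncomputable def Matrix.PosSemidef.sqrt {m 𝕜 : Type*} [Fintype m] [DecidableEq m] [RCLike 𝕜]
    {A : Matrix m m 𝕜} (hA : A.PosSemidef) : Matrix m m 𝕜 :=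
  (hA.1.eigenvectorUnitary : Matrix m m 𝕜) * diagonal ((↑) ∘ Real.sqrt ∘ hA.1.eigenvalues) *
    (star hA.1.eigenvectorUnitary : Matrix m m 𝕜)

/-- The absolute value `|a| = (a^* a)^{1/2}` of a matrix. -/
noncomputable def matAbs {n : ℕ} (a : Matrix (Fin n) (Fin n) ℂ) : Matrix (Fin n) (Fin n) ℂ :=
  (Matrix.posSemidef_conjTranspose_mul_self a).sqrt

theorem matAbs_isHermitian {n : ℕ} (a : Matrix (Fin n) (Fin n) ℂ) : (matAbs a).IsHermitian :=
  by
    unfold matAbs Matrix.PosSemidef.sqrt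
    simp [IsHermitian, conjTranspose_mul, Matrix.mul_assoc, diagonal_conjTranspose, Function.comp_def,
      Matrix.star_eq_conjTranspose, Pi.star_def, Complex.star_def, Complex.conj_ofReal]

/-- The non-linear trace of Sugeno type: `ψ_α(a) = ⋁_{i=1}^n (λ_i(a) ∧ α(i))`. -/
noncomputable def sugeno {n : ℕ} [NeZero n] (α : ℕ → ℝ) (a : Matrix (Fin n) (Fin n) ℂ)
    (ha : a.IsHermitian) : ℝ :=
  Finset.univ.sup' Finset.univ_nonempty fun i : Fin n => min (eigDesc a ha i) (α (i + 1))


namespace OrthonormalBasis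

variable {𝕜 E ι : Type*} [RCLike 𝕜] [NormedAddCommGroup E] [InnerProductSpace 𝕜 E] [Fintype ι]
  (b : OrthonormalBasis ι 𝕜 E) {T : E →ₗ[𝕜] E} {μ : ι → ℝ}

theorem re_inner_apply_self_eq_sum (hT : ∀ j, T (b j) = (μ j : 𝕜) • b j) (x : E) :
    RCLike.re (inner 𝕜 (T x) x) = ∑ j, μ j * ‖inner 𝕜 (b j) x‖ ^ 2 := by
  have hTx : T x = ∑ j, (μ j * inner 𝕜 (b j) x) • b j := by
    conv_lhs => rw [← b.sum_repr' x]
    simp only [map_sum, map_smul, hT, smul_smul, mul_comm]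
  rw [hTx, sum_inner, map_sum]
  refine sum_congr rfl fun j _ => ?_
  rw [inner_smul_left, (starRingEnd 𝕜).map_mul, RCLike.conj_ofReal, mul_assoc, RCLike.conj_mul,
    RCLike.re_ofReal_mul]
  norm_cast

theorem inner_eq_zero_of_mem_span_image {S : Set ι} {x : E} (hx : x ∈ Submodule.span 𝕜 (b '' S))
    {j : ι} (hj : j ∉ S) : inner 𝕜 (b j) x = 0 := by
  refine Submodule.mem_orthogonal_singleton_iff_inner_right.mp (Submodule.span_le.mpr ?_ hx)
  rintro _ ⟨i, hi, rfl⟩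
  exact Submodule.mem_orthogonal_singleton_iff_inner_right.mpr
    (b.orthonormal.inner_eq_zero fun h => hj (h ▸ hi))

theorem finrank_span_image (S : Finset ι) :
    Module.finrank 𝕜 (Submodule.span 𝕜 (b '' S)) = S.card := by
  rw [Set.image_eq_range]
  exact (finrank_span_eq_card (b.orthonormal.linearIndependent.comp _ Subtype.val_injective)).trans
    (by simp)

theorem mul_norm_sq_le_re_inner_apply_self (hT : ∀ j, T (b j) = (μ j : 𝕜) • b j) {S : Set ι}
    {c : ℝ} (hc : ∀ j ∈ S, c ≤ μ j) {x : E} (hx : x ∈ Submodule.span 𝕜 (b '' S)) :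
    c * ‖x‖ ^ 2 ≤ RCLike.re (inner 𝕜 (T x) x) := by
  rw [b.re_inner_apply_self_eq_sum hT, ← b.sum_sq_norm_inner_right x, mul_sum]
  refine sum_le_sum fun j _ => ?_
  by_cases hj : j ∈ S
  · exact mul_le_mul_of_nonneg_right (hc j hj) (sq_nonneg _)
  · simp [b.inner_eq_zero_of_mem_span_image hx hj]

theorem re_inner_apply_self_le_mul_norm_sq (hT : ∀ j, T (b j) = (μ j : 𝕜) • b j) {S : Set ι}
    {c : ℝ} (hc : ∀ j ∈ S, μ j ≤ c) {x : E} (hx : x ∈ Submodule.span 𝕜 (b '' S)) :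
    RCLike.re (inner 𝕜 (T x) x) ≤ c * ‖x‖ ^ 2 := by
  rw [b.re_inner_apply_self_eq_sum hT, ← b.sum_sq_norm_inner_right x, mul_sum]
  refine sum_le_sum fun j _ => ?_
  by_cases hj : j ∈ S
  · exact mul_le_mul_of_nonneg_right (hc j hj) (sq_nonneg _)
  · simp [b.inner_eq_zero_of_mem_span_image hx hj]

end OrthonormalBasis

theorem Submodule.exists_ne_zero_mem_inf_of_finrank_lt {K V : Type*} [DivisionRing K]
    [AddCommGroup V] [Module K V] [FiniteDimensional K V] {s t : Submodule K V}
    (h : Module.finrank K V < Module.finrank K s + Module.finrank K t) :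
    ∃ x ∈ s ⊓ t, x ≠ 0 :=
  (Submodule.ne_bot_iff _).mp fun hst =>
    (Submodule.finrank_add_finrank_le_of_disjoint (disjoint_iff.mpr hst)).not_gt h

theorem le_of_eigenbasis_of_re_inner_le {𝕜 E ι ι' : Type*} [RCLike 𝕜] [NormedAddCommGroup E]
    [InnerProductSpace 𝕜 E] [Fintype ι] [Fintype ι'] {T T' : E →ₗ[𝕜] E}
    {b : OrthonormalBasis ι 𝕜 E} {b' : OrthonormalBasis ι' 𝕜 E} {μ : ι → ℝ} {μ' : ι' → ℝ}
    (hT : ∀ j, T (b j) = (μ j : 𝕜) • b j) (hT' : ∀ j, T' (b' j) = (μ' j : 𝕜) • b' j)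
    (hle : ∀ x, RCLike.re (inner 𝕜 (T x) x) ≤ RCLike.re (inner 𝕜 (T' x) x))
    {S : Finset ι} {S' : Finset ι'} (hcard : Module.finrank 𝕜 E < S.card + S'.card)
    {c c' : ℝ} (hc : ∀ j ∈ S, c ≤ μ j) (hc' : ∀ j ∈ S', μ' j ≤ c') : c ≤ c' := by
  have := Module.Finite.of_basis b.toBasis
  obtain ⟨x, ⟨hxS, hxS'⟩, hx0⟩ := Submodule.exists_ne_zero_mem_inf_of_finrank_lt
    (s := Submodule.span 𝕜 (b '' S)) (t := Submodule.span 𝕜 (b' '' S'))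
    (by rwa [b.finrank_span_image, b'.finrank_span_image])
  have hx : 0 < ‖x‖ ^ 2 := by positivity
  refine le_of_mul_le_mul_right ?_ hx
  calc c * ‖x‖ ^ 2 ≤ RCLike.re (inner 𝕜 (T x) x) := b.mul_norm_sq_le_re_inner_apply_self hT hc hxS
    _ ≤ RCLike.re (inner 𝕜 (T' x) x) := hle x
    _ ≤ c' * ‖x‖ ^ 2 := b'.re_inner_apply_self_le_mul_norm_sq hT' hc' hxS'

theorem Matrix.IsHermitian.toEuclideanLin_eigenvectorBasis {𝕜 m : Type*} [RCLike 𝕜] [Fintype m]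
    [DecidableEq m] {A : Matrix m m 𝕜} (hA : A.IsHermitian) (j : m) :
    A.toEuclideanLin (hA.eigenvectorBasis j) = (hA.eigenvalues j : 𝕜) • hA.eigenvectorBasis j := by
  rw [Matrix.toLpLin_apply, hA.mulVec_eigenvectorBasis, RCLike.real_smul_eq_coe_smul (K := 𝕜),
    WithLp.toLp_smul, WithLp.toLp_ofLp]

theorem Matrix.PosSemidef.re_inner_toEuclideanLin_le {𝕜 m : Type*} [RCLike 𝕜] [Fintype m]
    [DecidableEq m] {A B : Matrix m m 𝕜} (hAB : (B - A).PosSemidef) (x : EuclideanSpace 𝕜 m) :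
    RCLike.re (inner 𝕜 (A.toEuclideanLin x) x) ≤ RCLike.re (inner 𝕜 (B.toEuclideanLin x) x) := by
  have := (Matrix.isPositive_toEuclideanLin_iff.mpr hAB).re_inner_nonneg_left x
  rw [map_sub, LinearMap.sub_apply, inner_sub_left, map_sub] at this
  linarith

theorem eigDesc_le_of_posSemidef_sub {n : ℕ} {a b : Matrix (Fin n) (Fin n) ℂ}
    (ha : a.IsHermitian) (hb : b.IsHermitian) (hab : (b - a).PosSemidef) (k : Fin n) :
    eigDesc a ha k ≤ eigDesc b hb k := by
  refine le_of_eigenbasis_of_re_inner_le ha.toEuclideanLin_eigenvectorBasis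
    hb.toEuclideanLin_eigenvectorBasis hab.re_inner_toEuclideanLin_le
    (S := (Ici k.rev).image (Tuple.sort ha.eigenvalues))
    (S' := (Iic k.rev).image (Tuple.sort hb.eigenvalues)) ?_ ?_ ?_
  · rw [finrank_euclideanSpace_fin, card_image_of_injective _ (Tuple.sort _).injective,
      card_image_of_injective _ (Tuple.sort _).injective, Fin.card_Ici, Fin.card_Iic]
    omega
  · exact forall_mem_image.mpr fun i hi => Tuple.monotone_sort ha.eigenvalues (mem_Ici.mp hi)
  · exact forall_mem_image.mpr fun i hi => Tuple.monotone_sort hb.eigenvalues (mem_Iic.mp hi)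

theorem stmt15_general (n : ℕ) [NeZero n] (α : ℕ → ℝ)
    (a b : Matrix (Fin n) (Fin n) ℂ) (ha : a.PosSemidef) (hb : b.PosSemidef)
    (hab : (b - a).PosSemidef) :
    sugeno α a ha.1 ≤ sugeno α b hb.1 :=
  sup'_mono_fun fun i _ =>
    min_le_min_right (α (i + 1)) (eigDesc_le_of_posSemidef_sub ha.1 hb.1 hab i)

/-- the Sugeno-type trace is monotone for the Loewner order. -/
theorem stmt15 (n : ℕ) [NeZero n] (α : ℕ → ℝ)
    (hnn : ∀ i : ℕ, 1 ≤ i → i ≤ n → 0 ≤ α i)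
    (hmono : ∀ i j : ℕ, 1 ≤ i → i ≤ j → j ≤ n → α i ≤ α j)
    (a b : Matrix (Fin n) (Fin n) ℂ) (ha : a.PosSemidef) (hb : b.PosSemidef)
    (hab : (b - a).PosSemidef) :
    sugeno α a ha.1 ≤ sugeno α b hb.1 :=
  stmt15_general n α a b ha hb hab
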